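/- For the reaction 2X₁ + X₂ ↔ 2X₃ with conservation matrix A = [[1,0,1],[0,2,1]], the conditional factorial moment identity gives: for independent Poisson X₁,X₂,X₃ with rates λ₁,λ₂,λ₃, Y₁ = X₁+X₃, Y₂ = 2X₂+X₃, and b₁ ≥ 1, b₂ ≥ 2, E[X₂ | Y=b] = λ₂ · F₀(b₁, b₂-2)/F₀(b₁,b₂) whenever P(Y=b)>0, where F₀(b₁,b₂) = Σ_{k₁+k₃=b₁, 2k₂+k₃=b₂} λ₁^{k₁}λ₂^{k₂}λ₃^{k₃}/(k₁!k₂!k₃!). -/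

import Mathlib

/-! Conditionally on `Y = b`, the law of `X = (X₁, X₂, X₃)` is proportional to the weight
`w k = λ₁^k₁ λ₂^k₂ λ₃^k₃ / (k₁! k₂! k₃!)` on the fiber `{k | k₁ + k₃ = b₁, 2 k₂ + k₃ = b₂}`, so
`E[X₂ | Y = b] = (Σ k₂ w k) / F₀(b₁, b₂)`, the sums running over the fiber. Since
`(k₂ + 1) w (k + e₂) = λ₂ w k`, the shift `k ↦ k + e₂`, a bijection from the fiber over
`(b₁, b₂ - 2)` onto the part of the fiber over `(b₁, b₂)` where `k₂ ≠ 0`, turns the numerator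
into `λ₂ F₀(b₁, b₂ - 2)`. -/

open MeasureTheory ProbabilityTheory Real
open scoped BigOperators

/-- For `A = [[1,0,1],[0,2,1]]`,
`F₀(b₁,b₂) = Σ_{k₁+k₃=b₁, 2k₂+k₃=b₂} λ₁^{k₁}λ₂^{k₂}λ₃^{k₃}/(k₁!k₂!k₃!)`. -/
noncomputable def F0water (lam1 lam2 lam3 : ℝ) (b₁ b₂ : ℕ) : ℝ :=
  ∑' k : ℕ × ℕ × ℕ,
    if k.1 + k.2.2 = b₁ ∧ 2 * k.2.1 + k.2.2 = b₂ then
      lam1 ^ k.1 * lam2 ^ k.2.1 * lam3 ^ k.2.2 /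
        (Nat.factorial k.1 * Nat.factorial k.2.1 * Nat.factorial k.2.2)
    else 0

open scoped Nat

section CondOfCountable

variable {α Ω : Type*} [MeasurableSpace α] [MeasurableSpace Ω]

lemma map_cond_preimage {μ : Measure Ω} {X : Ω → α} (hX : Measurable X) {T : Set α}
    (hT : MeasurableSet T) : (μ[|X ⁻¹' T]).map X = (μ.map X)[|T] := by
  rw [ProbabilityTheory.cond, ProbabilityTheory.cond, Measure.map_smul,
    ← Measure.restrict_map hX hT, Measure.map_apply hX hT]

lemma integral_comp_cond_preimage {μ : Measure Ω} {X : Ω → α} (hX : Measurable X) {T : Set α}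
    (hT : MeasurableSet T) {g : α → ℝ} (hg : Measurable g) :
    ∫ ω, g (X ω) ∂μ[|X ⁻¹' T] = ∫ a, g a ∂(μ.map X)[|T] := by
  rw [← map_cond_preimage hX hT, integral_map hX.aemeasurable hg.aestronglyMeasurable]

lemma integral_cond_eq_tsum_div [Countable α] [MeasurableSingletonClass α] {ν : Measure α}
    [IsFiniteMeasure ν] {T : Set α} {g : α → ℝ} (hg : IntegrableOn g T ν) :
    ∫ a, g a ∂ν[|T] = (∑' a : T, ν.real {(a : α)} * g a) / ∑' a : T, ν.real {(a : α)} := by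
  have hmass : ν.real T = ∑' a : T, ν.real {(a : α)} := by
    simpa using setIntegral_countable (μ := ν) (fun _ => (1 : ℝ)) T.to_countable integrableOn_const
  rw [ProbabilityTheory.cond, integral_smul_measure, setIntegral_countable g T.to_countable hg,
    ENNReal.toReal_inv, ← measureReal_def, hmass, smul_eq_mul, inv_mul_eq_div]
  rfl

end CondOfCountable

lemma ProbabilityTheory.iIndepFun.measure_preimage_prod_prod {Ω β : Type*} [MeasurableSpace Ω]
    [MeasurableSpace β] {μ : Measure Ω} {X1 X2 X3 : Ω → β} (h : iIndepFun ![X1, X2, X3] μ)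
    {s1 s2 s3 : Set β} (hs1 : MeasurableSet s1) (hs2 : MeasurableSet s2) (hs3 : MeasurableSet s3) :
    μ ((fun ω => (X1 ω, X2 ω, X3 ω)) ⁻¹' (s1 ×ˢ s2 ×ˢ s3)) =
      μ (X1 ⁻¹' s1) * μ (X2 ⁻¹' s2) * μ (X3 ⁻¹' s3) := by
  have h := h.measure_inter_preimage_eq_mul Finset.univ (sets := ![s1, s2, s3]) (by
    intro i _
    fin_cases i <;> assumption)
  simp only [Finset.mem_univ, Set.iInter_true, Fin.prod_univ_three, Matrix.cons_val_zero,
    Matrix.cons_val_one, Matrix.cons_val_two, Matrix.head_cons, Matrix.tail_cons] at h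
  rw [← h]
  congr 1
  ext ω
  simp [Fin.forall_fin_succ]

noncomputable def poissonWeight (lam1 lam2 lam3 : ℝ) (k : ℕ × ℕ × ℕ) : ℝ :=
  lam1 ^ k.1 * lam2 ^ k.2.1 * lam3 ^ k.2.2 / (k.1 ! * k.2.1 ! * k.2.2 !)

lemma poissonWeight_succ_mul (lam1 lam2 lam3 : ℝ) (a b c : ℕ) :
    poissonWeight lam1 lam2 lam3 (a, b + 1, c) * (b + 1 : ℕ) =
      lam2 * poissonWeight lam1 lam2 lam3 (a, b, c) := by
  simp only [poissonWeight, Nat.factorial_succ, pow_succ]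
  push_cast
  field_simp

lemma measureReal_map_singleton_eq_poissonWeight {Ω : Type*} [MeasurableSpace Ω]
    {μ : Measure Ω} {X1 X2 X3 : Ω → ℕ} (hm1 : Measurable X1) (hm2 : Measurable X2)
    (hm3 : Measurable X3) (hindep : iIndepFun ![X1, X2, X3] μ) {lam1 lam2 lam3 : ℝ}
    (h1 : 0 ≤ lam1) (h2 : 0 ≤ lam2) (h3 : 0 ≤ lam3)
    (hX1 : ∀ k : ℕ, μ (X1 ⁻¹' {k}) = ENNReal.ofReal (exp (-lam1) * lam1 ^ k / k !))
    (hX2 : ∀ k : ℕ, μ (X2 ⁻¹' {k}) = ENNReal.ofReal (exp (-lam2) * lam2 ^ k / k !))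
    (hX3 : ∀ k : ℕ, μ (X3 ⁻¹' {k}) = ENNReal.ofReal (exp (-lam3) * lam3 ^ k / k !))
    (k : ℕ × ℕ × ℕ) :
    (μ.map fun ω => (X1 ω, X2 ω, X3 ω)).real {k} =
      exp (-lam1) * exp (-lam2) * exp (-lam3) * poissonWeight lam1 lam2 lam3 k := by
  obtain ⟨a, b, c⟩ := k
  rw [measureReal_def, Measure.map_apply (hm1.prodMk (hm2.prodMk hm3)) (measurableSet_singleton _),
    ← Set.singleton_prod_singleton, ← Set.singleton_prod_singleton,
    hindep.measure_preimage_prod_prod (measurableSet_singleton a) (measurableSet_singleton b)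
      (measurableSet_singleton c), hX1, hX2, hX3, ← ENNReal.ofReal_mul (by positivity),
    ← ENNReal.ofReal_mul (by positivity), ENNReal.toReal_ofReal (by positivity), poissonWeight]
  ring

def waterFiber (b₁ b₂ : ℕ) : Set (ℕ × ℕ × ℕ) :=
  {k | k.1 + k.2.2 = b₁ ∧ 2 * k.2.1 + k.2.2 = b₂}

lemma F0water_eq_tsum_waterFiber (lam1 lam2 lam3 : ℝ) (b₁ b₂ : ℕ) :
    F0water lam1 lam2 lam3 b₁ b₂ = ∑' k : waterFiber b₁ b₂, poissonWeight lam1 lam2 lam3 k := by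
  classical
  rw [tsum_subtype, F0water]
  exact tsum_congr fun k => by rw [Set.indicator_apply]; congr

lemma tsum_waterFiber_mul_snd (lam1 lam2 lam3 : ℝ) (b₁ : ℕ) {b₂ : ℕ} (hb₂ : 2 ≤ b₂) :
    ∑' k : waterFiber b₁ b₂, poissonWeight lam1 lam2 lam3 k * (k.1.2.1 : ℝ) =
      lam2 * ∑' k : waterFiber b₁ (b₂ - 2), poissonWeight lam1 lam2 lam3 k := by
  let raise : waterFiber b₁ (b₂ - 2) → waterFiber b₁ b₂ := fun k =>
    ⟨(k.1.1, k.1.2.1 + 1, k.1.2.2), by obtain ⟨h₁, h₂⟩ := k.2; constructor <;> dsimp <;> omega⟩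
  have hraise : Function.Injective raise := by
    rintro ⟨⟨a, b, c⟩, _⟩ ⟨⟨a', b', c'⟩, _⟩ h
    simp_all [raise]
  have hsupp : Function.support (fun k : waterFiber b₁ b₂ =>
      poissonWeight lam1 lam2 lam3 k * (k.1.2.1 : ℝ)) ⊆ Set.range raise := by
    rintro ⟨⟨a, b, c⟩, hk⟩ hne
    obtain ⟨b, rfl⟩ : ∃ b', b = b' + 1 :=
      Nat.exists_eq_succ_of_ne_zero (by rintro rfl; simp at hne)
    obtain ⟨h₁, h₂⟩ := hk
    refine ⟨⟨(a, b, c), ?_⟩, rfl⟩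
    change a + c = b₁ ∧ 2 * b + c = b₂ - 2
    dsimp only at h₁ h₂
    omega
  rw [← hraise.tsum_eq hsupp, ← tsum_mul_left]
  exact tsum_congr fun ⟨⟨a, b, c⟩, _⟩ => poissonWeight_succ_mul lam1 lam2 lam3 a b c

lemma integrableOn_waterFiber_snd {ν : Measure (ℕ × ℕ × ℕ)} [IsFiniteMeasure ν] (b₁ b₂ : ℕ) :
    IntegrableOn (fun k : ℕ × ℕ × ℕ => (k.2.1 : ℝ)) (waterFiber b₁ b₂) ν := by
  refine Integrable.of_bound (measurable_of_countable _).aestronglyMeasurable b₂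
    (ae_restrict_of_forall_mem (waterFiber b₁ b₂).to_countable.measurableSet fun k hk => ?_)
  have : k.2.1 ≤ b₂ := by have := hk.2; omega
  simpa using this

theorem conditional_mean_water_general
    {Ω : Type*} [MeasurableSpace Ω] (μ : Measure Ω) [IsProbabilityMeasure μ]
    (X1 X2 X3 : Ω → ℕ) (hm1 : Measurable X1) (hm2 : Measurable X2) (hm3 : Measurable X3)
    (lam1 lam2 lam3 : ℝ) (h1 : 0 < lam1) (h2 : 0 < lam2) (h3 : 0 < lam3)
    (hindep : iIndepFun ![X1, X2, X3] μ)
    (hX1 : ∀ k : ℕ, μ (X1 ⁻¹' {k}) =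
      ENNReal.ofReal (Real.exp (-lam1) * lam1 ^ k / Nat.factorial k))
    (hX2 : ∀ k : ℕ, μ (X2 ⁻¹' {k}) =
      ENNReal.ofReal (Real.exp (-lam2) * lam2 ^ k / Nat.factorial k))
    (hX3 : ∀ k : ℕ, μ (X3 ⁻¹' {k}) =
      ENNReal.ofReal (Real.exp (-lam3) * lam3 ^ k / Nat.factorial k))
    (b₁ b₂ : ℕ) (hb₂ : 2 ≤ b₂) :
    ∫ ω, ((X2 ω : ℝ)) ∂(μ[|{ω | X1 ω + X3 ω = b₁ ∧ 2 * X2 ω + X3 ω = b₂}]) =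
      lam2 * F0water lam1 lam2 lam3 b₁ (b₂ - 2) / F0water lam1 lam2 lam3 b₁ b₂ := by
  have hlaw := measureReal_map_singleton_eq_poissonWeight hm1 hm2 hm3 hindep h1.le h2.le h3.le
    hX1 hX2 hX3
  refine (integral_comp_cond_preimage (hm1.prodMk (hm2.prodMk hm3))
    (waterFiber b₁ b₂).to_countable.measurableSet (g := fun k => (k.2.1 : ℝ))
    (measurable_of_countable _)).trans ?_
  rw [integral_cond_eq_tsum_div (integrableOn_waterFiber_snd b₁ b₂)]
  simp_rw [hlaw, mul_assoc _ (poissonWeight lam1 lam2 lam3 _), tsum_mul_left,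
    tsum_waterFiber_mul_snd lam1 lam2 lam3 b₁ hb₂, ← F0water_eq_tsum_waterFiber]
  exact mul_div_mul_left _ _ (by positivity : exp (-lam1) * exp (-lam2) * exp (-lam3) ≠ 0)

/-- For independent Poisson `X₁,X₂,X₃` with `Y₁ = X₁+X₃`, `Y₂ = 2X₂+X₃`,
`b₁ ≥ 1`, `b₂ ≥ 2` and `P(Y=b) > 0`,
`E[X₂ | Y=b] = λ₂ F₀(b₁, b₂-2)/F₀(b₁,b₂)`. -/
theorem conditional_mean_water
    {Ω : Type*} [MeasurableSpace Ω] (μ : Measure Ω) [IsProbabilityMeasure μ]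
    (X1 X2 X3 : Ω → ℕ) (hm1 : Measurable X1) (hm2 : Measurable X2) (hm3 : Measurable X3)
    (lam1 lam2 lam3 : ℝ) (h1 : 0 < lam1) (h2 : 0 < lam2) (h3 : 0 < lam3)
    (hindep : iIndepFun ![X1, X2, X3] μ)
    (hX1 : ∀ k : ℕ, μ (X1 ⁻¹' {k}) =
      ENNReal.ofReal (Real.exp (-lam1) * lam1 ^ k / Nat.factorial k))
    (hX2 : ∀ k : ℕ, μ (X2 ⁻¹' {k}) =
      ENNReal.ofReal (Real.exp (-lam2) * lam2 ^ k / Nat.factorial k))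
    (hX3 : ∀ k : ℕ, μ (X3 ⁻¹' {k}) =
      ENNReal.ofReal (Real.exp (-lam3) * lam3 ^ k / Nat.factorial k))
    (b₁ b₂ : ℕ) (hb₁ : 1 ≤ b₁) (hb₂ : 2 ≤ b₂)
    (hpos : 0 < μ {ω | X1 ω + X3 ω = b₁ ∧ 2 * X2 ω + X3 ω = b₂}) :
    ∫ ω, ((X2 ω : ℝ)) ∂(μ[|{ω | X1 ω + X3 ω = b₁ ∧ 2 * X2 ω + X3 ω = b₂}]) =
      lam2 * F0water lam1 lam2 lam3 b₁ (b₂ - 2) / F0water lam1 lam2 lam3 b₁ b₂ :=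
  conditional_mean_water_general μ X1 X2 X3 hm1 hm2 hm3 lam1 lam2 lam3 h1 h2 h3 hindep hX1 hX2 hX3
    b₁ b₂ hb₂
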